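/- Let (G,<) be an ordered group and let C be a convex subgroup of (G,<) which is not normal in G. Then there exists an element b ∈ G such that bCb⁻¹ ⊊ C, i.e., the conjugate subgroup bCb⁻¹ is properly contained in C. -/

import Mathlib

/-- A subgroup `C` of an ordered group is convex if whenever `x, z ∈ C`, `y ∈ G` and
`x ≤ y ≤ z`, then `y ∈ C`. -/
def Subgroup.IsConvex {G : Type*} [Group G] [Preorder G] (C : Subgroup G) : Prop :=
  ∀ x ∈ C, ∀ z ∈ C, ∀ y : G, x ≤ y → y ≤ z → y ∈ C

/-!
Conjugates of a convex subgroup `C` are convex, and convex subgroups of a linearly ordered group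
form a chain. If `C` is not normal, some conjugate `gCg⁻¹` differs from `C`, so one of `gCg⁻¹`
and `g⁻¹Cg` is properly contained in `C`.
-/

open scoped Pointwise

namespace Subgroup

variable {G : Type*} [Group G]

theorem IsConvex.conj_smul [Preorder G] [MulLeftMono G] [MulRightMono G] {C : Subgroup G}
    (hC : C.IsConvex) (b : G) : (MulAut.conj b • C).IsConvex := by
  intro x hx z hz y hxy hyz
  simp only [mem_pointwise_smul_iff_inv_smul_mem, ← map_inv, MulAut.smul_def,
    MulAut.conj_apply, inv_inv] at hx hz ⊢
  exact hC _ hx _ hz _ (by gcongr) (by gcongr)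

section LinearOrder

variable [LinearOrder G] [MulLeftMono G] [MulRightMono G] {C D : Subgroup G}

theorem IsConvex.mem_of_mabs_le (hC : C.IsConvex) {x y : G} (hx : x ∈ C) (hyx : |y|ₘ ≤ |x|ₘ) :
    y ∈ C :=
  mabs_mem_iff.1 (hC 1 C.one_mem _ (mabs_mem_iff.2 hx) _ (one_le_mabs y) hyx)

theorem IsConvex.le_total (hC : C.IsConvex) (hD : D.IsConvex) : C ≤ D ∨ D ≤ C := by
  by_contra! h
  obtain ⟨x, hxC, hxD⟩ := SetLike.not_le_iff_exists.1 h.1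
  obtain ⟨y, hyD, hyC⟩ := SetLike.not_le_iff_exists.1 h.2
  rcases _root_.le_total |x|ₘ |y|ₘ with hxy | hyx
  · exact hxD (hD.mem_of_mabs_le hyD hxy)
  · exact hyC (hC.mem_of_mabs_le hxC hyx)

theorem IsConvex.exists_conj_smul_lt (hC : C.IsConvex) (hCn : ¬C.Normal) :
    ∃ b : G, MulAut.conj b • C < C := by
  obtain ⟨g, hg⟩ : ∃ g : G, MulAut.conj g • C ≠ C := by
    by_contra! h
    exact hCn (Normal.of_conjugate_fixed h)
  rcases (hC.conj_smul g).le_total hC with hle | hge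
  · exact ⟨g, lt_of_le_of_ne hle hg⟩
  · refine ⟨g⁻¹, ?_⟩
    have hlt : C < MulAut.conj g • C := lt_of_le_of_ne hge hg.symm
    rw [map_inv]
    conv_rhs => rw [← inv_smul_smul (MulAut.conj g) C]
    simpa only [lt_iff_le_not_ge, pointwise_smul_le_pointwise_smul_iff] using hlt

end LinearOrder

end Subgroup

/-- Let `(G,<)` be an ordered group and let `C` be a convex subgroup of
`(G,<)` which is not normal in `G`. Then there exists `b ∈ G` such that `bCb⁻¹ ⊊ C`. -/
theorem exists_conjugate_properly_contained (G : Type*) [Group G] [LinearOrder G]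
    [CovariantClass G G (· * ·) (· < ·)]
    [CovariantClass G G (Function.swap (· * ·)) (· < ·)]
    (C : Subgroup G) (hC : C.IsConvex) (hCnn : ¬ C.Normal) :
    ∃ b : G, ((fun c => b * c * b⁻¹) '' (C : Set G)) ⊂ (C : Set G) := by
  have := mulLeftMono_of_mulLeftStrictMono G
  have := mulRightMono_of_mulRightStrictMono G
  obtain ⟨b, hb⟩ := hC.exists_conj_smul_lt hCnn
  refine ⟨b, ?_⟩
  have hconj : (fun c => b * c * b⁻¹) '' (C : Set G) = (MulAut.conj b • C : Subgroup G) := by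
    rw [Subgroup.coe_pointwise_smul]
    rfl
  rw [hconj]
  exact SetLike.coe_ssubset_coe.2 hb
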